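/- Every 2⊗d SPPT state of the form ρ = X†X with X = [[X₁, SX₁],[0, X₂]] satisfying X₁†S†SX₁ = X₁†SS†X₁ and rank(X₁†X₁) ≤ 3 is separable. (This uses the fact that every 2⊗k PPT state with k ≤ 3 is separable.) -/

import Mathlib

open Matrix Kronecker Finset ComplexOrder

/-- 2x2 block matrix with n×n blocks, indexed by `Fin 2 × n`. -/
def blk {n : Type*} (A B C D : Matrix n n ℂ) :
    Matrix (Fin 2 × n) (Fin 2 × n) ℂ := fun p q =>
  if p.1 = 0 then (if q.1 = 0 then A p.2 q.2 else B p.2 q.2)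
  else (if q.1 = 0 then C p.2 q.2 else D p.2 q.2)

/-- Partial transpose on the first (qubit) factor. -/
def ptA {n : Type*} (ρ : Matrix (Fin 2 × n) (Fin 2 × n) ℂ) :
    Matrix (Fin 2 × n) (Fin 2 × n) ℂ := fun p q => ρ (q.1, p.2) (p.1, q.2)

/-- Separability of an (unnormalized) state on ℂ²⊗ℂⁿ. -/
def SepState {n : Type*} [Fintype n] (ρ : Matrix (Fin 2 × n) (Fin 2 × n) ℂ) : Prop :=
  ∃ (N : ℕ) (σ : Fin N → Matrix (Fin 2) (Fin 2) ℂ) (P : Fin N → Matrix n n ℂ),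
    (∀ i, (σ i).PosSemidef) ∧ (∀ i, (P i).PosSemidef) ∧ ρ = ∑ i, σ i ⊗ₖ P i


/-!
Let `W * Wᴴ` be the orthogonal projection onto the column space of `X₁ᴴ`, with `W` having
`r = rank X₁ ≤ 3` columns. With `A = [X₁, S X₁; 0, 0]` one has `ρ = Aᴴ A + |1⟩⟨1| ⊗ X₂ᴴ X₂`, and
`Aᴴ A = V τ Vᴴ` for the local map `V = 1 ⊗ W` and the compressed state `τ = Vᴴ Aᴴ A V` on `ℂ² ⊗ ℂʳ`.
The SPPT condition says precisely that the partial transpose of `Aᴴ A` is the Gram matrix of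
`[X₁, Sᴴ X₁; 0, 0]`, so `τ` is PPT, hence separable by Horodecki's theorem; separability survives
local maps and sums.
-/

local notation "𝟙₂" => (1 : Matrix (Fin 2) (Fin 2) ℂ)

theorem Matrix.exists_mul_conjTranspose_mul_eq_self {𝕜 m n : Type*} [RCLike 𝕜] [Fintype m]
    [Fintype n] [DecidableEq n] (M : Matrix m n 𝕜) :
    ∃ W : Matrix m (Fin M.rank) 𝕜, W * Wᴴ * M = M := by
  let V := LinearMap.range (toEuclideanLin M)
  have hV : Module.finrank 𝕜 V = M.rank := (rank_eq_finrank_range_toLin M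
    (EuclideanSpace.basisFun m 𝕜).toBasis (EuclideanSpace.basisFun n 𝕜).toBasis).symm
  let b := (stdOrthonormalBasis 𝕜 V).reindex (finCongr hV)
  let W : Matrix m (Fin M.rank) 𝕜 := Matrix.of fun i k => (b k : EuclideanSpace 𝕜 m) i
  refine ⟨W, ?_⟩
  ext i j
  have hcol : toEuclideanLin M (EuclideanSpace.single j 1) ∈ V := LinearMap.mem_range_self _ _
  -- the columns of `M` lie in `V`, onto which `W * Wᴴ` is the orthogonal projection
  have hexp : ∑ k, (∑ l, M l j * star (W l k)) * W i k = M i j := by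
    simpa [W, Submodule.coe_inner, PiLp.inner_apply] using
      congrArg (fun x : V => (x : EuclideanSpace 𝕜 m) i) (b.sum_repr' ⟨_, hcol⟩)
  rw [← hexp]
  simp only [Matrix.mul_apply, conjTranspose_apply, Finset.sum_mul]
  rw [Finset.sum_comm]
  exact sum_congr rfl fun _ _ => sum_congr rfl fun _ _ => by ring

theorem Matrix.PosSemidef.single {R n : Type*} [Ring R] [PartialOrder R] [StarRing R]
    [StarOrderedRing R] [Fintype n] [DecidableEq n] (i : n) {r : R} (hr : 0 ≤ r) :
    (Matrix.single i i r).PosSemidef :=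
  diagonal_single i r ▸ PosSemidef.diagonal (Pi.single_nonneg.2 hr)

section Blocks

variable {n : Type*}

theorem blk_conjTranspose (A B C D : Matrix n n ℂ) : (blk A B C D)ᴴ = blk Aᴴ Cᴴ Bᴴ Dᴴ := by
  ext ⟨a, i⟩ ⟨b, j⟩
  fin_cases a <;> fin_cases b <;> simp [blk]

theorem blk_add (A B C D A' B' C' D' : Matrix n n ℂ) :
    blk A B C D + blk A' B' C' D' = blk (A + A') (B + B') (C + C') (D + D') := by
  ext ⟨a, i⟩ ⟨b, j⟩
  fin_cases a <;> fin_cases b <;> simp [blk]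

theorem blk_mul [Fintype n] (A B C D A' B' C' D' : Matrix n n ℂ) :
    blk A B C D * blk A' B' C' D' =
      blk (A * A' + B * C') (A * B' + B * D') (C * A' + D * C') (C * B' + D * D') := by
  ext ⟨a, i⟩ ⟨b, j⟩
  fin_cases a <;> fin_cases b <;> simp [blk, mul_apply, Fintype.sum_prod_type, Fin.sum_univ_two]

theorem kronecker_eq_blk (σ : Matrix (Fin 2) (Fin 2) ℂ) (P : Matrix n n ℂ) :
    σ ⊗ₖ P = blk (σ 0 0 • P) (σ 0 1 • P) (σ 1 0 • P) (σ 1 1 • P) := by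
  ext ⟨a, i⟩ ⟨b, j⟩
  fin_cases a <;> fin_cases b <;> simp [blk]

theorem ptA_blk (A B C D : Matrix n n ℂ) : ptA (blk A B C D) = blk A C B D := by
  ext ⟨a, i⟩ ⟨b, j⟩
  fin_cases a <;> fin_cases b <;> simp [blk, ptA]

variable [Fintype n]

theorem conjTranspose_mul_self_blk_zero (P Q R : Matrix n n ℂ) :
    (blk P Q 0 R)ᴴ * blk P Q 0 R =
      (blk P Q 0 0)ᴴ * blk P Q 0 0 + Matrix.single 1 1 1 ⊗ₖ (Rᴴ * R) := by
  rw [kronecker_eq_blk]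
  simp [blk_conjTranspose, blk_mul, blk_add]

theorem ptA_conjTranspose_mul_self_blk {P S : Matrix n n ℂ}
    (h : Pᴴ * Sᴴ * S * P = Pᴴ * S * Sᴴ * P) :
    ptA ((blk P (S * P) 0 0)ᴴ * blk P (S * P) 0 0) =
      (blk P (Sᴴ * P) 0 0)ᴴ * blk P (Sᴴ * P) 0 0 := by
  simp only [Matrix.mul_assoc] at h
  simp [blk_conjTranspose, blk_mul, ptA_blk, h, Matrix.mul_assoc]

end Blocks

section LocalOperations

variable {n k : Type*} [Fintype n]

theorem ptA_one_kronecker_mul_mul (M : Matrix k n ℂ) (ρ : Matrix (Fin 2 × n) (Fin 2 × n) ℂ)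
    (N : Matrix n k ℂ) : ptA ((𝟙₂ ⊗ₖ M) * ρ * (𝟙₂ ⊗ₖ N)) = (𝟙₂ ⊗ₖ M) * ptA ρ * (𝟙₂ ⊗ₖ N) := by
  ext ⟨a, i⟩ ⟨b, j⟩
  simp only [ptA, mul_apply, kroneckerMap_apply, Fintype.sum_prod_type, one_apply]
  simp [ite_mul, Finset.sum_ite_eq]

theorem posSemidef_ptA_conjTranspose_one_kronecker_mul_mul [Fintype k]
    {ρ : Matrix (Fin 2 × n) (Fin 2 × n) ℂ}
    (h : (ptA ρ).PosSemidef) (W : Matrix n k ℂ) :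
    (ptA ((𝟙₂ ⊗ₖ W)ᴴ * ρ * (𝟙₂ ⊗ₖ W))).PosSemidef := by
  have hW : (𝟙₂ ⊗ₖ W)ᴴ = 𝟙₂ ⊗ₖ Wᴴ := by rw [conjTranspose_kronecker, conjTranspose_one]
  rw [hW, ptA_one_kronecker_mul_mul, ← hW]
  exact h.conjTranspose_mul_mul_same _

end LocalOperations

namespace SepState

variable {n : Type*} [Fintype n]

theorem kronecker {σ : Matrix (Fin 2) (Fin 2) ℂ} {P : Matrix n n ℂ} (hσ : σ.PosSemidef)
    (hP : P.PosSemidef) : SepState (σ ⊗ₖ P) :=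
  ⟨1, fun _ => σ, fun _ => P, fun _ => hσ, fun _ => hP, by simp⟩

theorem add {ρ ρ' : Matrix (Fin 2 × n) (Fin 2 × n) ℂ} (h : SepState ρ) (h' : SepState ρ') :
    SepState (ρ + ρ') := by
  obtain ⟨N, σ, P, hσ, hP, rfl⟩ := h
  obtain ⟨N', σ', P', hσ', hP', rfl⟩ := h'
  refine ⟨N + N', Fin.append σ σ', Fin.append P P', Fin.addCases (by simpa) (by simpa),
    Fin.addCases (by simpa) (by simpa), ?_⟩
  rw [Fin.sum_univ_add]
  simp

theorem one_kronecker_conj {k : Type*} [Fintype k] {τ : Matrix (Fin 2 × k) (Fin 2 × k) ℂ}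
    (h : SepState τ) (W : Matrix n k ℂ) : SepState ((𝟙₂ ⊗ₖ W) * τ * (𝟙₂ ⊗ₖ W)ᴴ) := by
  obtain ⟨N, σ, P, hσ, hP, rfl⟩ := h
  refine ⟨N, σ, fun i => W * P i * Wᴴ, hσ, fun i => (hP i).mul_mul_conjTranspose_same W, ?_⟩
  rw [Matrix.mul_sum, Matrix.sum_mul]
  refine sum_congr rfl fun i _ => ?_
  rw [conjTranspose_kronecker, conjTranspose_one, ← mul_kronecker_mul, ← mul_kronecker_mul,
    one_mul, mul_one]

end SepState

theorem stmt11 {d : ℕ} (X₁ X₂ S : Matrix (Fin d) (Fin d) ℂ)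
    (hsppt : X₁ᴴ * Sᴴ * S * X₁ = X₁ᴴ * S * Sᴴ * X₁)
    (hrank : (X₁ᴴ * X₁).rank ≤ 3)
    (horodecki : ∀ k : ℕ, k ≤ 3 →
      ∀ τ : Matrix (Fin 2 × Fin k) (Fin 2 × Fin k) ℂ,
        τ.PosSemidef → (ptA τ).PosSemidef → SepState τ) :
    SepState ((blk X₁ (S * X₁) 0 X₂)ᴴ * blk X₁ (S * X₁) 0 X₂) := by
  obtain ⟨W, hW⟩ := X₁ᴴ.exists_mul_conjTranspose_mul_eq_self
  have hk : X₁ᴴ.rank ≤ 3 := by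
    rwa [← rank_self_mul_conjTranspose, conjTranspose_conjTranspose]
  have hX₁ : X₁ * (W * Wᴴ) = X₁ := by
    simpa [conjTranspose_mul, Matrix.mul_assoc] using congrArg conjTranspose hW
  set A := blk X₁ (S * X₁) 0 0
  set V : Matrix (Fin 2 × Fin d) (Fin 2 × Fin X₁ᴴ.rank) ℂ := 𝟙₂ ⊗ₖ W
  have hA : A * (V * Vᴴ) = A := by
    rw [conjTranspose_kronecker, conjTranspose_one, ← mul_kronecker_mul, Matrix.mul_one,
      kronecker_eq_blk, blk_mul]
    simp [A, hX₁, Matrix.mul_assoc]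
  have hτ : SepState (Vᴴ * (Aᴴ * A) * V) :=
    horodecki _ hk _ ((posSemidef_conjTranspose_mul_self A).conjTranspose_mul_mul_same V)
      (posSemidef_ptA_conjTranspose_one_kronecker_mul_mul
        (ptA_conjTranspose_mul_self_blk hsppt ▸ posSemidef_conjTranspose_mul_self _) W)
  have hρ : V * (Vᴴ * (Aᴴ * A) * V) * Vᴴ = Aᴴ * A := by
    calc V * (Vᴴ * (Aᴴ * A) * V) * Vᴴ = (A * (V * Vᴴ))ᴴ * (A * (V * Vᴴ)) := by
          simp only [conjTranspose_mul, conjTranspose_conjTranspose, Matrix.mul_assoc]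
      _ = Aᴴ * A := by rw [hA]
  rw [conjTranspose_mul_self_blk_zero, ← hρ]
  exact (hτ.one_kronecker_conj W).add
    (SepState.kronecker (PosSemidef.single 1 zero_le_one) (posSemidef_conjTranspose_mul_self X₂))
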